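/- Let b : ℝ → ℂ be a continuous function satisfying b(t) = conj(b(t)) · exp(-i ω t) for all t, where ω = 2π/T with T > 0, and suppose b is periodic with period T. Then there exists t₀ such that b(t₀) = 0. -/

import Mathlib

/-!
Twisting by half the phase, `f(t) = b(t) · exp(iωt/2)`, turns the constraint into
`conj f = f`, so `f` is real-valued; and since `ωT = 2π`, the twist changes sign over a
period, so `f(t + T) = -f(t)`. A continuous real function that changes sign over a period
vanishes somewhere by the intermediate value theorem.
-/

open Complex ComplexConjugate Function

theorem Function.Periodic.mul_antiperiodic {α β : Type*} [Add α] [Mul β] [HasDistribNeg β]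
    {f g : α → β} {c : α} (hf : Periodic f c) (hg : Antiperiodic g c) :
    Antiperiodic (f * g) c := by
  simp_all

theorem Function.Antiperiodic.exists_eq_zero {X α : Type*} [Add X] [Nonempty X]
    [TopologicalSpace X] [PreconnectedSpace X] [AddCommGroup α] [LinearOrder α]
    [IsOrderedAddMonoid α] [TopologicalSpace α] [OrderClosedTopology α]
    {f : X → α} {c : X} (hf : Continuous f) (hc : Antiperiodic f c) : ∃ x, f x = 0 := by
  obtain ⟨x⟩ := ‹Nonempty X›
  rcases le_total (f x) 0 with h | h
  · exact mem_range_of_exists_le_of_exists_ge hf ⟨x, h⟩ ⟨x + c, by rw [hc x]; exact neg_nonneg.2 h⟩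
  · exact mem_range_of_exists_le_of_exists_ge hf ⟨x + c, by rw [hc x]; exact neg_nonpos.2 h⟩ ⟨x, h⟩

theorem Complex.exists_eq_zero_of_conj_eq_of_antiperiodic {X : Type*} [Add X] [Nonempty X]
    [TopologicalSpace X] [PreconnectedSpace X] {f : X → ℂ} {c : X} (hf : Continuous f)
    (hreal : ∀ x, conj (f x) = f x) (hc : Antiperiodic f c) : ∃ x, f x = 0 := by
  obtain ⟨x, hx⟩ := Antiperiodic.exists_eq_zero (f := fun x => (f x).re) (c := c)
    (continuous_re.comp hf) (fun x => by simp only [hc x, neg_re])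
  exact ⟨x, by rw [← conj_eq_iff_re.1 (hreal x), hx, ofReal_zero]⟩

theorem Complex.conj_mul_exp_half_eq_self {z : ℂ} {θ : ℝ} (h : z = conj z * exp (-I * θ)) :
    conj (z * exp (θ * I / 2)) = z * exp (θ * I / 2) := by
  calc conj (z * exp (θ * I / 2)) = conj z * exp (-I * θ) * exp (θ * I / 2) := by
        rw [map_mul, ← exp_conj, mul_assoc, ← exp_add]
        simp only [map_div₀, map_mul, conj_ofReal, conj_I, map_ofNat]
        ring_nf
    _ = z * exp (θ * I / 2) := by rw [← h]

theorem Complex.antiperiodic_exp_mul_half {ω T : ℝ} (hωT : ω * T = 2 * Real.pi) :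
    Antiperiodic (fun t : ℝ => exp (↑(ω * t) * I / 2)) T := by
  intro t
  have : (↑(ω * (t + T)) * I / 2 : ℂ) = ↑(ω * t) * I / 2 + Real.pi * I := by
    rw [mul_add, ofReal_add, hωT]; push_cast; ring
  simp only [this, exp_antiperiodic _]

/-- A continuous `T`-periodic function `b : ℝ → ℂ` satisfying the glide-symmetry
constraint `b(t) = conj(b(t)) · exp(-iωt)` with `ω = 2π/T` must vanish somewhere. -/
theorem glide_constraint_periodic_vanishes
    (T ω : ℝ) (hT : 0 < T) (hω : ω = 2 * Real.pi / T)
    (b : ℝ → ℂ) (hb : Continuous b)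
    (hconstraint : ∀ t : ℝ,
      b t = (starRingEnd ℂ) (b t) * Complex.exp (-Complex.I * ω * t))
    (hper : ∀ t : ℝ, b (t + T) = b t) :
    ∃ t₀ : ℝ, b t₀ = 0 := by
  have hωT : ω * T = 2 * Real.pi := by rw [hω]; field_simp
  obtain ⟨t, ht⟩ := exists_eq_zero_of_conj_eq_of_antiperiodic
    (f := fun t : ℝ => b t * exp (↑(ω * t) * I / 2)) (by fun_prop)
    (fun t => conj_mul_exp_half_eq_self (by rw [ofReal_mul, ← mul_assoc]; exact hconstraint t))
    (Periodic.mul_antiperiodic hper (antiperiodic_exp_mul_half hωT))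
  exact ⟨t, (mul_eq_zero.1 ht).resolve_right (exp_ne_zero _)⟩
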